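/- arXiv:2401.03714 — 6 statements merged into one kernel-verified Lean document; each statement's English description precedes it below -/
import Mathlib

section
/- Let u_K, u_L ∈ ℝ with jump j := u_L − u_K ≠ 0, and let g_K, g_L ∈ co{0, j} be minmod-admissible slopes. Set r⁻ := u_K + g_K/2 and r⁺ := u_L − g_L/2, and define the entropy-dissipation coefficient D := (f^EC(u_K, u_L) − f^God(r⁻, r⁺)) / j. Then j/24 ≤ D ≤ (1/12)·|j| + (7/8)·max(|u_K|, |u_L|). -/
/-!
Write `m = (u_K + u_L)/2`, so that `f^EC(u_K, u_L) = m²/2 + j²/24` and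
`D = j/24 + (m²/2 - f^God(r⁻, r⁺))/j`.  The Godunov flux is monotone (nondecreasing in the left
state, nonincreasing in the right one) and consistent, `f^God(m, m) = m²/2`; since minmod
slopes place `m` between `r⁻` and `r⁺` on the side dictated by the sign of `j`, the fraction is
nonnegative, which is the lower bound.  For the upper bound, `f^God(r⁻, r⁺) = w²/2` for some `w`
between `r⁻` and `r⁺`, hence between `u_K` and `u_L`; then `|w - m| ≤ |j|/2` and
`|w|, |m| ≤ max(|u_K|, |u_L|)` bound the fraction by `max(|u_K|, |u_L|)/2`.
-/

/-- Second-order entropy-conservative numerical flux for the Burgers equation. -/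
noncomputable def fEC (a b : ℝ) : ℝ := (1/24) * (12 * ((a + b)/2)^2 + (b - a)^2)

/-- Godunov flux for the Burgers equation. -/
noncomputable def fGod (a b : ℝ) : ℝ := (1/2) * max ((max a 0)^2) ((min b 0)^2)

open Set

lemma fEC_eq (a b : ℝ) : fEC a b = ((a + b) / 2) ^ 2 / 2 + (b - a) ^ 2 / 24 := by
  rw [fEC]; ring

lemma fGod_self (u : ℝ) : fGod u u = u ^ 2 / 2 := by
  rcases le_total u 0 with h | h <;> simp [fGod, h, sq_nonneg, div_eq_inv_mul]

lemma fGod_le_fGod {a a' b b' : ℝ} (ha : a ≤ a') (hb : b' ≤ b) : fGod a b ≤ fGod a' b' := by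
  have hmax : max a 0 ^ 2 ≤ max a' 0 ^ 2 :=
    pow_le_pow_left₀ (le_max_right _ _) (max_le_max_right 0 ha) 2
  have hmin : min b 0 ^ 2 ≤ min b' 0 ^ 2 := by
    nlinarith [min_le_min_right 0 hb, min_le_right b 0]
  unfold fGod
  gcongr

lemma exists_mem_uIcc_fGod_eq (a b : ℝ) : ∃ w ∈ uIcc a b, fGod a b = w ^ 2 / 2 := by
  rcases le_total a b with hab | hba
  · rcases le_total 0 a with ha | ha
    · exact ⟨a, left_mem_uIcc, by simp [fGod, ha, ha.trans hab, div_eq_inv_mul]⟩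
    rcases le_total b 0 with hb | hb
    · exact ⟨b, right_mem_uIcc, by simp [fGod, hb, hab.trans hb, sq_nonneg, div_eq_inv_mul]⟩
    · exact ⟨0, by simp [uIcc_of_le hab, ha, hb], by simp [fGod, ha, hb]⟩
  · rcases le_total a 0 with ha | ha
    · exact ⟨b, right_mem_uIcc, by simp [fGod, ha, hba.trans ha, sq_nonneg, div_eq_inv_mul]⟩
    rcases le_total 0 b with hb | hb
    · exact ⟨a, left_mem_uIcc, by simp [fGod, ha, hb, div_eq_inv_mul]⟩
    · rcases max_choice (a ^ 2) (b ^ 2) with h | h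
      · exact ⟨a, left_mem_uIcc, by simp [fGod, ha, hb, h, div_eq_inv_mul]⟩
      · exact ⟨b, right_mem_uIcc, by simp [fGod, ha, hb, h, div_eq_inv_mul]⟩

lemma abs_sub_add_div_two_le_of_mem_uIcc {a b w : ℝ} (hw : w ∈ uIcc a b) :
    |w - (a + b) / 2| ≤ |b - a| / 2 := by
  rw [abs_le]
  rcases le_total a b with h | h
  · rw [uIcc_of_le h] at hw
    rw [abs_of_nonneg (sub_nonneg.2 h)]
    constructor <;> linarith [hw.1, hw.2]
  · rw [uIcc_of_ge h] at hw
    rw [abs_of_nonpos (sub_nonpos.2 h)]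
    constructor <;> linarith [hw.1, hw.2]

lemma abs_le_max_abs_abs_of_mem_uIcc {a b w : ℝ} (hw : w ∈ uIcc a b) :
    |w| ≤ max |a| |b| := by
  rcases le_total a b with h | h
  · rw [uIcc_of_le h] at hw
    exact abs_le_max_abs_abs hw.1 hw.2
  · rw [uIcc_of_ge h] at hw
    exact max_comm |b| |a| ▸ abs_le_max_abs_abs hw.1 hw.2

lemma abs_add_div_two_le_max_abs_abs (a b : ℝ) : |(a + b) / 2| ≤ max |a| |b| := by
  rw [abs_le]
  have ha := abs_le.1 (le_max_left |a| |b|)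
  have hb := abs_le.1 (le_max_right |a| |b|)
  constructor <;> linarith [ha.1, ha.2, hb.1, hb.2]

lemma abs_fGod_sub_le_of_mem_uIcc {a b r s : ℝ} (hr : r ∈ uIcc a b) (hs : s ∈ uIcc a b) :
    |fGod r s - ((a + b) / 2) ^ 2 / 2| ≤ max |a| |b| * |b - a| / 2 := by
  obtain ⟨w, hw, hGod⟩ := exists_mem_uIcc_fGod_eq r s
  have hwab : w ∈ uIcc a b := uIcc_subset_uIcc hr hs hw
  set m := (a + b) / 2
  calc |fGod r s - m ^ 2 / 2| = |w ^ 2 - m ^ 2| / 2 := by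
        rw [hGod, ← sub_div, abs_div, abs_two]
    _ ≤ |w - m| * 2 * max |w| |m| / 2 := by
        gcongr; simpa using abs_pow_sub_pow_le w m 2
    _ ≤ |b - a| / 2 * 2 * max |a| |b| / 2 := by
        gcongr ?_ * 2 * ?_ / 2
        · exact abs_sub_add_div_two_le_of_mem_uIcc hwab
        · exact max_le (abs_le_max_abs_abs_of_mem_uIcc hwab) (abs_add_div_two_le_max_abs_abs a b)
    _ = max |a| |b| * |b - a| / 2 := by ring

lemma add_half_mem_uIcc {a b g : ℝ} (hg : g ∈ uIcc 0 (b - a)) : a + g / 2 ∈ uIcc a b := by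
  rw [mem_uIcc] at hg ⊢
  rcases hg with h | h <;> [left; right] <;> constructor <;> linarith [h.1, h.2]

lemma sub_half_mem_uIcc {a b g : ℝ} (hg : g ∈ uIcc 0 (b - a)) : b - g / 2 ∈ uIcc a b := by
  rw [mem_uIcc] at hg ⊢
  rcases hg with h | h <;> [left; right] <;> constructor <;> linarith [h.1, h.2]

lemma mul_fGod_sub_fGod_nonneg {a b gK gL : ℝ} (hgK : gK ∈ uIcc 0 (b - a))
    (hgL : gL ∈ uIcc 0 (b - a)) :
    0 ≤ (b - a) * (fGod ((a + b) / 2) ((a + b) / 2) - fGod (a + gK / 2) (b - gL / 2)) := by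
  rcases le_total 0 (b - a) with hj | hj
  · rw [uIcc_of_le hj] at hgK hgL
    exact mul_nonneg hj <| sub_nonneg.2 <|
      fGod_le_fGod (by linarith [hgK.2]) (by linarith [hgL.2])
  · rw [uIcc_of_ge hj] at hgK hgL
    exact mul_nonneg_of_nonpos_of_nonpos hj <| sub_nonpos.2 <|
      fGod_le_fGod (by linarith [hgK.1]) (by linarith [hgL.1])

theorem stmt_0 (uK uL j : ℝ) (hj : j = uL - uK) (hjne : j ≠ 0)
    (gK gL : ℝ)
    (hgK : gK ∈ Set.Icc (min 0 j) (max 0 j))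
    (hgL : gL ∈ Set.Icc (min 0 j) (max 0 j))
    (rm rp : ℝ) (hrm : rm = uK + gK / 2) (hrp : rp = uL - gL / 2)
    (D : ℝ) (hD : D = (fEC uK uL - fGod rm rp) / j) :
    j / 24 ≤ D ∧ D ≤ (1/12) * |j| + (7/8) * max |uK| |uL| := by
  subst hj hrm hrp hD
  set m := (uK + uL) / 2
  set X := fGod m m - fGod (uK + gK / 2) (uL - gL / 2) with hX
  have hsign : 0 ≤ (uL - uK) * X := mul_fGod_sub_fGod_nonneg hgK hgL
  have hbound : |X| ≤ max |uK| |uL| * |uL - uK| / 2 := by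
    rw [hX, fGod_self, abs_sub_comm]
    exact abs_fGod_sub_le_of_mem_uIcc (add_half_mem_uIcc hgK) (sub_half_mem_uIcc hgL)
  have hD : (fEC uK uL - fGod (uK + gK / 2) (uL - gL / 2)) / (uL - uK)
      = (uL - uK) / 24 + X / (uL - uK) := by
    rw [hX, fEC_eq, fGod_self]; field_simp; ring
  have hX_nonneg : 0 ≤ X / (uL - uK) := by
    rw [← mul_div_mul_left X _ hjne, ← sq]
    exact div_nonneg hsign (sq_nonneg _)
  have hX_le : X / (uL - uK) ≤ max |uK| |uL| / 2 := by
    refine (le_abs_self _).trans ?_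
    rw [abs_div, div_le_iff₀ (abs_pos.2 hjne)]
    linarith
  have hM : 0 ≤ max |uK| |uL| := (abs_nonneg uK).trans (le_max_left _ _)
  rw [hD]
  constructor <;> linarith [le_abs_self (uL - uK), abs_nonneg (uL - uK)]
end

section
/- (Shock case with positive reconstructed average.) Let λ ∈ (0,1], μ ∈ ℝ, j < 0 and A > 0 satisfy 2·|μ−1|·A ≤ −min(λ, 1−λ)·j. Define D := λ·A/2 + ((μ²−1)/2)·A²/j + ((1−3λ²)/24)·j. Then j/24 ≤ D ≤ (3/4)·A + |j|/12. -/
/-!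
Multiplying by `j < 0` turns both bounds into polynomial inequalities in `t := |μ - 1| A`, and the
admissibility condition says `t ≤ -λ j / 2` and `t ≤ -(1 - λ) j / 2`. The lower bound only needs the
first of these (the quadratic part `(μ - 1)² A²` is then dominated by `λ² j² / 4`), the upper bound
only the second (the linear part `(μ - 1) A²` is then absorbed into `(1 - λ) A |j| / 2`).
-/

namespace ShockDissipation

noncomputable def numerator (lam mu j A : ℝ) : ℝ :=
  lam * A * j / 2 + (mu ^ 2 - 1) / 2 * A ^ 2 + (1 - 3 * lam ^ 2) / 24 * j ^ 2

variable {lam mu j A : ℝ}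

lemma eq_numerator_div (hj : j ≠ 0) :
    lam * A / 2 + ((mu ^ 2 - 1) / 2) * A ^ 2 / j + ((1 - 3 * lam ^ 2) / 24) * j =
      numerator lam mu j A / j := by
  unfold numerator
  field_simp

lemma numerator_le (hA : 0 ≤ A) (hadm : 2 * |mu - 1| * A ≤ -lam * j) :
    numerator lam mu j A ≤ j / 24 * j := by
  have hlin : (mu - 1) * A * A ≤ |mu - 1| * A * A :=
    mul_le_mul_of_nonneg_right (mul_le_mul_of_nonneg_right (le_abs_self _) hA) hA
  have hsq : ((mu - 1) * A) ^ 2 = (|mu - 1| * A) ^ 2 := by rw [mul_pow, mul_pow, sq_abs]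
  have hgap : 0 ≤ (-lam * j / 2 - |mu - 1| * A) * A := mul_nonneg (by linarith) hA
  have hgap_sq : 0 ≤ (-lam * j / 2 - |mu - 1| * A) * (-lam * j / 2 + |mu - 1| * A) :=
    mul_nonneg (by linarith) (by linarith [abs_nonneg (mu - 1), mul_nonneg (abs_nonneg (mu - 1)) hA])
  unfold numerator
  linear_combination hlin + hgap + hgap_sq / 2 + hsq / 2

lemma le_numerator (hj : j < 0) (hA : 0 ≤ A) (hlam : 0 ≤ lam)
    (hadm : 2 * |mu - 1| * A ≤ -(1 - lam) * j) :
    (3 / 4 * A - j / 12) * j ≤ numerator lam mu j A := by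
  have hlin : -(|mu - 1| * A * A) ≤ (mu - 1) * A * A := by
    have := mul_le_mul_of_nonneg_right (mul_le_mul_of_nonneg_right (neg_abs_le (mu - 1)) hA) hA
    linarith
  have hlam1 : lam ≤ 1 := by nlinarith [abs_nonneg (mu - 1), mul_nonneg (abs_nonneg (mu - 1)) hA]
  have hgap : 0 ≤ (-(1 - lam) * j / 2 - |mu - 1| * A) * A := mul_nonneg (by linarith) hA
  have hAj : 0 ≤ A * -j := mul_nonneg hA (by linarith)
  have hlam_sq : 0 ≤ (1 - lam ^ 2) * j ^ 2 := mul_nonneg (by nlinarith) (sq_nonneg j)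
  unfold numerator
  linear_combination hlin + hgap + sq_nonneg ((mu - 1) * A) / 2 + hAj / 4 + hlam_sq / 8

end ShockDissipation

open ShockDissipation in
theorem stmt_1 (lam mu j A : ℝ)
    (hlam : lam ∈ Set.Ioc (0:ℝ) 1)
    (hj : j < 0) (hA : 0 < A)
    (hadm : 2 * |mu - 1| * A ≤ -(min lam (1 - lam)) * j)
    (D : ℝ)
    (hD : D = lam * A / 2 + ((mu^2 - 1)/2) * A^2 / j + ((1 - 3 * lam^2)/24) * j) :
    j / 24 ≤ D ∧ D ≤ (3/4) * A + |j| / 12 := by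
  have hmin : ∀ c, min lam (1 - lam) ≤ c → 2 * |mu - 1| * A ≤ -c * j := fun c hc =>
    hadm.trans (by simpa only [neg_mul, mul_neg, neg_neg] using
      mul_le_mul_of_nonneg_right hc (neg_nonneg.mpr hj.le))
  rw [hD, eq_numerator_div hj.ne, abs_of_neg hj, neg_div, ← sub_eq_add_neg]
  constructor
  · rw [le_div_iff_of_neg hj]
    exact numerator_le hA.le (hmin lam (min_le_left _ _))
  · rw [div_le_iff_of_neg hj]
    exact le_numerator hj hA.le hlam.1.le (hmin _ (min_le_right _ _))
end

section
/- (Shock case with nonpositive reconstructed average.) Let λ ∈ (0,1], μ ∈ ℝ, j < 0 and A ≤ 0 satisfy 2·|μ−1|·|A| ≤ −min(λ, 1−λ)·j. Define D := −λ·A/2 + ((μ²−1)/2)·A²/j + ((1−3λ²)/24)·j. Then j/24 ≤ D ≤ (3/4)·|A| + |j|/12. -/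
/-!
Write `D = -λA/2 + ((μA)² - A²)/(2j) + (1 - 3λ²)j/24`. The admissibility condition says that
`μA` lies within `min(λ, 1-λ)·|j|/2` of `A`. Within distance `λ|j|/2` the middle term is at least
`λA/2 + λ²j/8`, which cancels the other `λ`-terms and leaves `j/24`; within distance `(1-λ)|j|/2`
it is at most `-(1-λ)A/2`, which gives `D ≤ |A|/2 + |j|/12`.
-/

section SqSubSq

variable {R : Type*} [CommRing R] [LinearOrder R] [IsStrictOrderedRing R] {x y c : R}

theorem sq_sub_sq_le_of_abs_sub_le (h : |y - x| ≤ c) : y ^ 2 - x ^ 2 ≤ 2 * |x| * c + c ^ 2 := by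
  have hy : |y| ≤ |x| + c := by
    calc |y| = |x + (y - x)| := by rw [add_sub_cancel]
      _ ≤ |x| + |y - x| := abs_add_le _ _
      _ ≤ |x| + c := by gcongr
  have hc : 0 ≤ c := (abs_nonneg _).trans h
  calc y ^ 2 - x ^ 2 = |y| ^ 2 - |x| ^ 2 := by rw [sq_abs, sq_abs]
    _ ≤ (|x| + c) ^ 2 - |x| ^ 2 := by gcongr
    _ = 2 * |x| * c + c ^ 2 := by ring

theorem neg_two_mul_abs_mul_le_sq_sub_sq_of_abs_sub_le (h : |y - x| ≤ c) :
    -(2 * |x| * c) ≤ y ^ 2 - x ^ 2 := by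
  have hxy : |x| - |y| ≤ c := (abs_sub_abs_le_abs_sub x y).trans (abs_sub_comm x y ▸ h)
  -- `2|x|c ≥ 2|x|(|x| - |y|)`, and `2|x|(|x| - |y|) - |x|² + |y|² = (|x| - |y|)²`.
  nlinarith [sq_abs x, sq_abs y, abs_nonneg x, sq_nonneg (|x| - |y|),
    mul_le_mul_of_nonneg_left hxy (abs_nonneg x)]

end SqSubSq

theorem stmt_2 (lam mu j A : ℝ)
    (hlam : lam ∈ Set.Ioc (0:ℝ) 1)
    (hj : j < 0) (hA : A ≤ 0)
    (hadm : 2 * |mu - 1| * |A| ≤ -(min lam (1 - lam)) * j)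
    (D : ℝ)
    (hD : D = -(lam * A) / 2 + ((mu^2 - 1)/2) * A^2 / j + ((1 - 3 * lam^2)/24) * j) :
    j / 24 ≤ D ∧ D ≤ (3/4) * |A| + |j| / 12 := by
  obtain ⟨hl0, hl1⟩ := hlam
  have hj0 : j ≠ 0 := hj.ne
  have hdist : |mu * A - A| = |mu - 1| * |A| := by rw [← sub_one_mul, abs_mul]
  have hdist_lam : |mu * A - A| ≤ lam * -j / 2 := by
    linarith [mul_le_mul_of_nonneg_right (min_le_left lam (1 - lam)) (neg_nonneg.2 hj.le)]
  have hdist_one_sub_lam : |mu * A - A| ≤ (1 - lam) * -j / 2 := by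
    linarith [mul_le_mul_of_nonneg_right (min_le_right lam (1 - lam)) (neg_nonneg.2 hj.le)]
  have hD' : D = -(lam * A) / 2 + ((mu * A) ^ 2 - A ^ 2) / (2 * j)
      + ((1 - 3 * lam ^ 2) / 24) * j := by
    rw [hD]; field_simp
  have hmid_low := div_le_div_of_nonpos_of_le (by linarith : 2 * j ≤ 0)
    (sq_sub_sq_le_of_abs_sub_le hdist_lam)
  have hmid_upp := div_le_div_of_nonpos_of_le (by linarith : 2 * j ≤ 0)
    (neg_two_mul_abs_mul_le_sq_sub_sq_of_abs_sub_le hdist_one_sub_lam)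
  rw [abs_of_nonpos hA] at hmid_low hmid_upp ⊢
  rw [abs_of_neg hj]
  have hlow_eq : (2 * -A * (lam * -j / 2) + (lam * -j / 2) ^ 2) / (2 * j)
      = lam * A / 2 + lam ^ 2 * j / 8 := by
    field_simp; ring
  have hupp_eq : -(2 * -A * ((1 - lam) * -j / 2)) / (2 * j) = -((1 - lam) * A) / 2 := by
    field_simp
  have hjump_term : (1 - 3 * lam ^ 2) / 24 * j ≤ -j / 12 := by
    nlinarith [mul_nonneg (by nlinarith : 0 ≤ 1 - lam ^ 2) (by linarith : 0 ≤ -j)]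
  constructor <;> linarith
end

section
/- (Rarefaction case with positive reconstructed states.) Let λ ∈ (0,1], μ ∈ (0,2), and j, A ∈ ℝ satisfy 2·A > λ·j > 0 and 2·|μ−1|·A ≤ min(λ, 1−λ)·j. Define D := λ·A/2 + ((μ²−1)/2)·A²/j + ((1−3λ²)/24)·j. Then j/24 ≤ D ≤ (7/8)·A + j/24. -/
/-!
One computes `D - j/24 = ((2μA)² - (2A - λj)²) / (8j)`. Since `2A > λj`, the admissibility
condition gives `0 < 2A - λj ≤ 2μA`, so the numerator is nonnegative; writing `2μA = 2A + x`
with `|x| ≤ λj` and `x ≤ (1 - λ)j` bounds it by `4Aj`, i.e. even `D ≤ A/2 + j/24`.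
-/

namespace BurgersRarefaction

theorem dissipation_sub_eq {lam mu j A : ℝ} (hj : j ≠ 0) :
    lam * A / 2 + ((mu^2 - 1)/2) * A^2 / j + ((1 - 3 * lam^2)/24) * j - j / 24
      = ((2 * mu * A)^2 - (2 * A - lam * j)^2) / (8 * j) := by
  field_simp
  ring

theorem sq_sub_le_sq_mul {lam mu j A : ℝ} (hA : 0 ≤ A) (hpos : 0 ≤ 2 * A - lam * j)
    (hadm : 2 * |mu - 1| * A ≤ lam * j) :
    (2 * A - lam * j)^2 ≤ (2 * mu * A)^2 := by
  have : 2 * (1 - mu) * A ≤ 2 * |mu - 1| * A := by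
    gcongr
    linarith [neg_le_abs (mu - 1)]
  exact pow_le_pow_left₀ hpos (by linarith) 2

theorem sq_mul_sub_sq_le {lam mu j A : ℝ} (hA : 0 ≤ A)
    (hadm : 2 * |mu - 1| * A ≤ lam * j) (hadm' : 2 * |mu - 1| * A ≤ (1 - lam) * j) :
    (2 * mu * A)^2 - (2 * A - lam * j)^2 ≤ 4 * A * j := by
  set x := 2 * (mu - 1) * A with hx
  have habs : |x| = 2 * |mu - 1| * A := by
    rw [hx, abs_mul, abs_mul, abs_two, abs_of_nonneg hA]
  have hsq : x^2 ≤ (lam * j)^2 := sq_le_sq' (by linarith [neg_abs_le x]) (by linarith [le_abs_self x])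
  have hlin : 4 * A * x ≤ 4 * A * ((1 - lam) * j) :=
    mul_le_mul_of_nonneg_left (by linarith [le_abs_self x]) (by positivity)
  -- `(2A + x)² - (2A - λj)² - 4Aj = (x² - (λj)²) + 4A(x - (1 - λ)j)`
  nlinarith

end BurgersRarefaction

open BurgersRarefaction in
theorem stmt_3_general (lam mu j A : ℝ)
    (hlam : lam ∈ Set.Ioc (0:ℝ) 1)
    (h1 : 2 * A > lam * j) (h2 : lam * j > 0)
    (hadm : 2 * |mu - 1| * A ≤ min lam (1 - lam) * j)
    (D : ℝ)
    (hD : D = lam * A / 2 + ((mu^2 - 1)/2) * A^2 / j + ((1 - 3 * lam^2)/24) * j) :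
    j / 24 ≤ D ∧ D ≤ (7/8) * A + j / 24 := by
  have hj : 0 < j := pos_of_mul_pos_right h2 hlam.1.le
  have hA : 0 < A := by linarith
  have hadm_lam : 2 * |mu - 1| * A ≤ lam * j :=
    hadm.trans (mul_le_mul_of_nonneg_right (min_le_left _ _) hj.le)
  have hadm_one_sub : 2 * |mu - 1| * A ≤ (1 - lam) * j :=
    hadm.trans (mul_le_mul_of_nonneg_right (min_le_right _ _) hj.le)
  have hlower := sq_sub_le_sq_mul hA.le (by linarith) hadm_lam
  have hupper := sq_mul_sub_sq_le hA.le hadm_lam hadm_one_sub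
  have hsub := dissipation_sub_eq (lam := lam) (mu := mu) (A := A) hj.ne'
  rw [← hD] at hsub
  constructor
  · have : 0 ≤ D - j / 24 := hsub ▸ div_nonneg (by linarith) (by positivity)
    linarith
  · have : D - j / 24 ≤ A / 2 := by
      rw [hsub, div_le_iff₀ (by positivity)]
      linarith
    linarith

theorem stmt_3 (lam mu j A : ℝ)
    (hlam : lam ∈ Set.Ioc (0:ℝ) 1)
    (hmu : mu ∈ Set.Ioo (0:ℝ) 2)
    (h1 : 2 * A > lam * j) (h2 : lam * j > 0)
    (hadm : 2 * |mu - 1| * A ≤ min lam (1 - lam) * j)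
    (D : ℝ)
    (hD : D = lam * A / 2 + ((mu^2 - 1)/2) * A^2 / j + ((1 - 3 * lam^2)/24) * j) :
    j / 24 ≤ D ∧ D ≤ (7/8) * A + j / 24 :=
  stmt_3_general lam mu j A hlam h1 h2 hadm D hD
end

section
/- Let λ ∈ (0,1], μ ∈ (0,2) and χ > λ/2 satisfy 2·|μ−1|·χ ≤ min(λ, 1−λ). Then the quadratic g(χ) := ((μ²−1)/2)·χ² + (λ/2)·χ + (1−3λ²)/24 satisfies g(χ) ≥ 1/24. -/
/-!
The gap `g(χ) - 1/24` factors as `(λ - 2(1-μ)χ)(2(1+μ)χ - λ) / 8`. The first factor is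
nonnegative by the slope admissibility `2|μ-1|χ ≤ λ`, the second then because
`2(1+μ)χ - λ = (4χ - 2λ) + (λ - 2(1-μ)χ)` and `2χ > λ`.
-/

noncomputable def dissipationCoeff (lam mu chi : ℝ) : ℝ :=
  ((mu ^ 2 - 1) / 2) * chi ^ 2 + (lam / 2) * chi + (1 - 3 * lam ^ 2) / 24

theorem dissipationCoeff_sub_eq (lam mu chi : ℝ) :
    dissipationCoeff lam mu chi - 1 / 24 =
      (lam - 2 * (1 - mu) * chi) * (2 * (1 + mu) * chi - lam) / 8 := by
  unfold dissipationCoeff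
  ring

theorem one_div_24_le_dissipationCoeff {lam mu chi : ℝ}
    (hleft : 2 * (1 - mu) * chi ≤ lam) (hright : lam ≤ 2 * (1 + mu) * chi) :
    1 / 24 ≤ dissipationCoeff lam mu chi := by
  have hgap := dissipationCoeff_sub_eq lam mu chi
  have := mul_nonneg (sub_nonneg.2 hleft) (sub_nonneg.2 hright)
  linarith

theorem stmt_6_general (lam mu chi : ℝ)
    (hlam : lam ∈ Set.Ioc (0:ℝ) 1)
    (hchi : chi > lam / 2)
    (hadm : 2 * |mu - 1| * chi ≤ min lam (1 - lam)) :
    ((mu^2 - 1)/2) * chi^2 + (lam/2) * chi + (1 - 3 * lam^2)/24 ≥ 1/24 := by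
  have hchi_pos : 0 < chi := by linarith [hlam.1]
  have hleft : 2 * (1 - mu) * chi ≤ lam :=
    calc 2 * (1 - mu) * chi ≤ 2 * |mu - 1| * chi := by
          gcongr
          rw [abs_sub_comm]
          exact le_abs_self _
      _ ≤ lam := hadm.trans (min_le_left _ _)
  have hright : lam ≤ 2 * (1 + mu) * chi := by linarith
  exact one_div_24_le_dissipationCoeff hleft hright

theorem stmt_6 (lam mu chi : ℝ)
    (hlam : lam ∈ Set.Ioc (0:ℝ) 1)
    (hmu : mu ∈ Set.Ioo (0:ℝ) 2)
    (hchi : chi > lam / 2)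
    (hadm : 2 * |mu - 1| * chi ≤ min lam (1 - lam)) :
    ((mu^2 - 1)/2) * chi^2 + (lam/2) * chi + (1 - 3 * lam^2)/24 ≥ 1/24 :=
  stmt_6_general lam mu chi hlam hchi hadm
end

section
/- Let Δt > 0, n ∈ ℕ, t_k := k·Δt for k ∈ ℕ, and let τ ∈ [t_n, t_{n+1}). Let r : ℕ → ℝ, and let r_h : ℝ → ℝ be the piecewise constant function with r_h(t) = r_k for t ∈ [t_k, t_{k+1}), k ≥ 0. Let φ : ℝ → ℝ be continuously differentiable. With the forward difference operator D_t v(t) := (v(t + Δt) − v(t))/Δt, the following identity holds: φ(τ)·r_n − φ(0)·r_0 − ∫₀^{t_n} (φ(t)·D_t r_h(t) + r_h(t)·φ'(t)) dt = ∫₀^{t_n} ((φ(t) − φ(t − Δt))/Δt − φ'(t))·r_h(t) dt + ∫_{t_n}^{t_{n+1}} r_n·(φ(τ) − φ(t − Δt))/Δt dt − ∫₀^{Δt} r_0·(φ(0) − φ(t − Δt))/Δt dt. -/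
/-!
Pointwise, the two integrands over `[0, t_n]` add up to the discrete product-rule
quotient `(φ t * r_h (t + Δt) - φ (t - Δt) * r_h t) / Δt`. On the cell `[t_k, t_{k+1})` its
numerator is `r_{k+1} φ t - r_k φ (t - Δt)`, so after the shift `t ↦ t - Δt` the cell
integrals telescope to `r_n ∫_{t_n}^{t_{n+1}} φ (t - Δt) - r_0 ∫_0^{Δt} φ (t - Δt)`, which is
also what the two boundary integrals on the right contribute.
-/

open intervalIntegral MeasureTheory Set
open scoped Interval

section EqOnIco

variable {a b : ℝ} {f g : ℝ → ℝ}

theorem ae_restrict_uIoc_of_eqOn_Ico (hab : a ≤ b) (h : EqOn f g (Ico a b)) :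
    f =ᵐ[volume.restrict (Ι a b)] g := by
  rw [uIoc_of_le hab, ← restrict_Ico_eq_restrict_Ioc]
  exact ae_restrict_of_forall_mem measurableSet_Ico h

theorem IntervalIntegrable.of_eqOn_Ico (hab : a ≤ b) (h : EqOn f g (Ico a b))
    (hg : IntervalIntegrable g volume a b) : IntervalIntegrable f volume a b :=
  hg.congr_ae (ae_restrict_uIoc_of_eqOn_Ico hab h).symm

theorem intervalIntegral.integral_congr_Ico (hab : a ≤ b) (h : EqOn f g (Ico a b)) :
    ∫ t in a..b, f t = ∫ t in a..b, g t :=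
  integral_congr_ae <| (ae_restrict_iff' measurableSet_uIoc).mp <|
    ae_restrict_uIoc_of_eqOn_Ico hab h

theorem intervalIntegral.integral_mul_sub_div_of_sub_eq {δ : ℝ}
    (hf : IntervalIntegrable f volume a b) (hab : b - a = δ) (hδ : δ ≠ 0) (c d : ℝ) :
    ∫ t in a..b, c * ((d - f t) / δ) = c * d - c * (∫ t in a..b, f t) / δ := by
  simp_rw [mul_div_assoc', integral_div, integral_const_mul,
    integral_sub intervalIntegrable_const hf, integral_const, hab, smul_eq_mul]
  field_simp

end EqOnIco

section StepFunction

variable {Δt : ℝ} {r : ℕ → ℝ} {rh : ℝ → ℝ}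

theorem grid_le (hΔt : 0 ≤ Δt) (k : ℕ) : (k : ℝ) * Δt ≤ ((k : ℝ) + 1) * Δt := by
  nlinarith

variable (hrh : ∀ k : ℕ, ∀ t ∈ Ico ((k : ℝ) * Δt) (((k : ℝ) + 1) * Δt), rh t = r k)
include hrh

theorem step_shift_eq {k : ℕ} {t : ℝ} (ht : t ∈ Ico ((k : ℝ) * Δt) (((k : ℝ) + 1) * Δt)) :
    rh (t + Δt) = r (k + 1) :=
  hrh (k + 1) (t + Δt) (by push_cast; constructor <;> linarith [ht.1, ht.2])

theorem eqOn_step_comp (F : ℝ → ℝ → ℝ → ℝ) (k : ℕ) :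
    EqOn (fun t => F t (rh t) (rh (t + Δt))) (fun t => F t (r k) (r (k + 1)))
      (Ico ((k : ℝ) * Δt) (((k : ℝ) + 1) * Δt)) := fun t ht => by
  simp only [hrh k t ht, step_shift_eq hrh ht]

theorem intervalIntegrable_step_comp_cell (hΔt : 0 ≤ Δt) (F : ℝ → ℝ → ℝ → ℝ)
    (hF : ∀ x y, Continuous fun t => F t x y) (k : ℕ) :
    IntervalIntegrable (fun t => F t (rh t) (rh (t + Δt))) volume
      ((k : ℝ) * Δt) (((k : ℝ) + 1) * Δt) :=
  .of_eqOn_Ico (grid_le hΔt k) (eqOn_step_comp hrh F k) ((hF _ _).intervalIntegrable _ _)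

theorem intervalIntegrable_step_comp (hΔt : 0 ≤ Δt) (F : ℝ → ℝ → ℝ → ℝ)
    (hF : ∀ x y, Continuous fun t => F t x y) (n : ℕ) :
    IntervalIntegrable (fun t => F t (rh t) (rh (t + Δt))) volume 0 ((n : ℝ) * Δt) := by
  simpa using IntervalIntegrable.trans_iterate (a := fun k : ℕ => (k : ℝ) * Δt) (n := n)
    fun k _ => by
      push_cast
      exact intervalIntegrable_step_comp_cell hrh hΔt F hF k

theorem integral_mul_step_shift_sub (hΔt : 0 ≤ Δt) {φ : ℝ → ℝ} (hφ : Continuous φ) (n : ℕ) :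
    ∫ t in (0 : ℝ)..(n : ℝ) * Δt, (φ t * rh (t + Δt) - φ (t - Δt) * rh t)
      = r n * (∫ t in (n : ℝ) * Δt..((n : ℝ) + 1) * Δt, φ (t - Δt))
        - r 0 * ∫ t in (0 : ℝ)..Δt, φ (t - Δt) := by
  set A : ℕ → ℝ := fun k => r k * ∫ t in (k : ℝ) * Δt..((k : ℝ) + 1) * Δt, φ (t - Δt)
  have hcell : ∀ k : ℕ, ∫ t in (k : ℝ) * Δt..((k : ℝ) + 1) * Δt,
      (φ t * rh (t + Δt) - φ (t - Δt) * rh t) = A (k + 1) - A k := fun k => by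
    have hshift : ∫ t in (k : ℝ) * Δt..((k : ℝ) + 1) * Δt, φ t
        = ∫ t in ((k + 1 : ℕ) : ℝ) * Δt..((k + 1 : ℕ) + 1) * Δt, φ (t - Δt) := by
      rw [integral_comp_sub_right]
      congr 1 <;> push_cast <;> ring
    rw [integral_congr_Ico (grid_le hΔt k)
        (eqOn_step_comp hrh (fun t x y => φ t * y - φ (t - Δt) * x) k),
      integral_sub (Continuous.intervalIntegrable (by fun_prop) _ _)
        (Continuous.intervalIntegrable (by fun_prop) _ _),
      intervalIntegral.integral_mul_const, intervalIntegral.integral_mul_const, hshift]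
    ring
  have hsum := sum_integral_adjacent_intervals (a := fun k : ℕ => (k : ℝ) * Δt) (n := n)
    (f := fun t => φ t * rh (t + Δt) - φ (t - Δt) * rh t) (μ := volume) fun k _ => by
      push_cast
      exact intervalIntegrable_step_comp_cell hrh hΔt (fun t x y => φ t * y - φ (t - Δt) * x)
        (fun _ _ => by fun_prop) k
  push_cast at hsum
  simp only [zero_mul, hcell, Finset.sum_range_sub] at hsum
  simp [← hsum, A]

end StepFunction

theorem stmt_18_general (Δt : ℝ) (hΔt : 0 < Δt) (n : ℕ)
    (τ : ℝ)
    (r : ℕ → ℝ) (rh : ℝ → ℝ)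
    (hrh : ∀ k : ℕ, ∀ t ∈ Set.Ico ((k : ℝ) * Δt) (((k : ℝ) + 1) * Δt), rh t = r k)
    (φ : ℝ → ℝ) (hφ : ContDiff ℝ 1 φ) :
    φ τ * r n - φ 0 * r 0
        - ∫ t in (0:ℝ)..((n : ℝ) * Δt),
            (φ t * ((rh (t + Δt) - rh t) / Δt) + rh t * deriv φ t)
      = (∫ t in (0:ℝ)..((n : ℝ) * Δt),
            ((φ t - φ (t - Δt)) / Δt - deriv φ t) * rh t)
        + (∫ t in ((n : ℝ) * Δt)..(((n : ℝ) + 1) * Δt),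
            r n * ((φ τ - φ (t - Δt)) / Δt))
        - ∫ t in (0:ℝ)..Δt, r 0 * ((φ 0 - φ (t - Δt)) / Δt) := by
  have hφc : Continuous φ := hφ.continuous
  have hφ' : Continuous (deriv φ) := hφ.continuous_deriv le_rfl
  have hsum : (∫ t in (0 : ℝ)..(n : ℝ) * Δt,
        (φ t * ((rh (t + Δt) - rh t) / Δt) + rh t * deriv φ t))
      + (∫ t in (0 : ℝ)..(n : ℝ) * Δt, ((φ t - φ (t - Δt)) / Δt - deriv φ t) * rh t)
      = (∫ t in (0 : ℝ)..(n : ℝ) * Δt, (φ t * rh (t + Δt) - φ (t - Δt) * rh t)) / Δt := by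
    rw [← integral_add
      (intervalIntegrable_step_comp hrh hΔt.le
        (fun t x y => φ t * ((y - x) / Δt) + x * deriv φ t) (fun _ _ => by fun_prop) n)
      (intervalIntegrable_step_comp hrh hΔt.le
        (fun t x _ => ((φ t - φ (t - Δt)) / Δt - deriv φ t) * x) (fun _ _ => by fun_prop) n),
      ← intervalIntegral.integral_div]
    refine integral_congr fun t _ => ?_
    field_simp
    ring
  have hφshift : ∀ a b, IntervalIntegrable (fun t => φ (t - Δt)) volume a b :=
    fun _ _ => Continuous.intervalIntegrable (by fun_prop) _ _
  rw [integral_mul_step_shift_sub hrh hΔt.le hφc] at hsum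
  rw [integral_mul_sub_div_of_sub_eq (hφshift _ _) (by ring) hΔt.ne',
    integral_mul_sub_div_of_sub_eq (hφshift _ _) (by ring) hΔt.ne']
  linear_combination -hsum

theorem stmt_18 (Δt : ℝ) (hΔt : 0 < Δt) (n : ℕ)
    (τ : ℝ) (hτ : τ ∈ Set.Ico ((n : ℝ) * Δt) (((n : ℝ) + 1) * Δt))
    (r : ℕ → ℝ) (rh : ℝ → ℝ)
    (hrh : ∀ k : ℕ, ∀ t ∈ Set.Ico ((k : ℝ) * Δt) (((k : ℝ) + 1) * Δt), rh t = r k)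
    (φ : ℝ → ℝ) (hφ : ContDiff ℝ 1 φ) :
    φ τ * r n - φ 0 * r 0
        - ∫ t in (0:ℝ)..((n : ℝ) * Δt),
            (φ t * ((rh (t + Δt) - rh t) / Δt) + rh t * deriv φ t)
      = (∫ t in (0:ℝ)..((n : ℝ) * Δt),
            ((φ t - φ (t - Δt)) / Δt - deriv φ t) * rh t)
        + (∫ t in ((n : ℝ) * Δt)..(((n : ℝ) + 1) * Δt),
            r n * ((φ τ - φ (t - Δt)) / Δt))
        - ∫ t in (0:ℝ)..Δt, r 0 * ((φ 0 - φ (t - Δt)) / Δt) :=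
  stmt_18_general Δt hΔt n τ r rh hrh φ hφ
end
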